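/- arXiv:2206.05611 — 6 statements merged into one kernel-verified Lean document; each statement's English description precedes it below -/
import Mathlib

section
/- Let k be a field of characteristic zero. Let R, T, U ∈ k[x2,x3] be nonzero homogeneous polynomials and let ℓ1, ℓ2, ℓ3 ∈ k[x2,x3] be pairwise independent linear forms (each nonzero homogeneous of degree 1, and no two of them proportional). Suppose that ℓ1^r R + ℓ2^t T + ℓ3^u U = 0 for some natural numbers r, t, u, and let d = r + deg R = t + deg T = u + deg U be the common total degree of the three summands. Then min{r, t, u} ≤ ⌊(2d+1)/3⌋. -/
/-!
Write `a = ℓ₁^r R`, `b = ℓ₂^t T`, `c = ℓ₃^u U` and let `D` be the derivation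
`f ↦ ∂(ℓ₂, f)/∂(x₂, x₃)`, which kills `ℓ₂` and sends `ℓ₁` to a nonzero constant.
The Wronskian `W = a D b - b D a` is homogeneous of degree `2d - 1` and divisible by `ℓ₁^(r-1)`
and `ℓ₂^t`; since `a + b + c = 0` gives `W(a, b) = W(c, a)`, it is also divisible by `ℓ₃^(u-1)`.
So if `W ≠ 0`, then `(r - 1) + t + (u - 1) ≤ 2d - 1`. If `W = 0`, then `a / b` is `D`-constant,
and in characteristic zero this forces `ℓ₁` to divide `a` and `b` to the same power;
hence `ℓ₁^r ∣ T` and `r + t ≤ d`.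
-/

open MvPolynomial

namespace Derivation

variable {R A : Type*} [CommSemiring R] [CommRing A] [Algebra R A] (D : Derivation R A A)

def wronskian (a b : A) : A := a * D b - b * D a

theorem wronskian_eq_of_add_add_eq_zero {a b c : A} (h : a + b + c = 0) :
    D.wronskian a b = D.wronskian c a := by
  obtain rfl : c = -a - b := by linear_combination h
  simp only [wronskian, map_sub, map_neg]
  ring

theorem mul_apply_pow (ℓ : A) (n : ℕ) : ℓ * D (ℓ ^ n) = n * ℓ ^ n * D ℓ := by
  rcases n with _ | n
  · simp
  · simp only [leibniz_pow, nsmul_eq_mul, smul_eq_mul, Nat.add_sub_cancel]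
    ring

theorem pow_pred_dvd_apply_pow_mul (ℓ x : A) (n : ℕ) : ℓ ^ (n - 1) ∣ D (ℓ ^ n * x) := by
  rw [leibniz, leibniz_pow, smul_eq_mul, smul_eq_mul, nsmul_eq_mul, smul_eq_mul]
  exact dvd_add ((pow_dvd_pow ℓ (Nat.sub_le n 1)).mul_right _) ⟨x * n * D ℓ, by ring⟩

theorem pow_pred_dvd_wronskian_pow_mul (ℓ x b : A) (n : ℕ) :
    ℓ ^ (n - 1) ∣ D.wronskian (ℓ ^ n * x) b :=
  dvd_sub (((pow_dvd_pow ℓ (Nat.sub_le n 1)).mul_right x).mul_right _)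
    ((D.pow_pred_dvd_apply_pow_mul ℓ x n).mul_left b)

theorem pow_dvd_wronskian_mul_pow_of_apply_eq_zero {ℓ : A} (hℓ : D ℓ = 0) (a x : A) (n : ℕ) :
    ℓ ^ n ∣ D.wronskian a (ℓ ^ n * x) := by
  have hD : D (ℓ ^ n * x) = ℓ ^ n * D x := by
    simp [leibniz, leibniz_pow, hℓ]
  rw [wronskian, hD]
  exact dvd_sub ((dvd_mul_right _ _).mul_left a) (((dvd_mul_right _ _).mul_right _))

theorem pow_dvd_of_wronskian_eq_zero [IsDomain A] [WfDvdMonoid A] [Algebra ℚ A] {ℓ a b : A}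
    (hℓ : Prime ℓ) (hDℓ : ¬ ℓ ∣ D ℓ) (ha : a ≠ 0) (hb : b ≠ 0) (hW : D.wronskian a b = 0) {n : ℕ}
    (hn : ℓ ^ n ∣ a) : ℓ ^ n ∣ b := by
  obtain ⟨m, a₀, ha₀, rfl⟩ := WfDvdMonoid.max_power_factor ha hℓ.irreducible
  obtain ⟨k, b₀, hb₀, rfl⟩ := WfDvdMonoid.max_power_factor hb hℓ.irreducible
  obtain rfl : m = k := by
    by_contra hmk
    -- `ℓ^(m+k-1) (k - m) a₀ b₀ Dℓ` is the `ℓ`-adically lowest term of `W(ℓ^m a₀, ℓ^k b₀)`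
    have key : ℓ ^ (m + k) * (((k : A) - m) * (D ℓ * a₀ * b₀) + ℓ * D.wronskian a₀ b₀) = 0 := by
      rw [← mul_zero ℓ, ← hW]
      simp only [wronskian, leibniz, smul_eq_mul]
      linear_combination (ℓ ^ k * b₀ * a₀) * D.mul_apply_pow ℓ m -
        (ℓ ^ m * a₀ * b₀) * D.mul_apply_pow ℓ k
    have hunit : IsUnit ((k : A) - m) := by
      have : ((k : ℚ) - m) ≠ 0 := sub_ne_zero.mpr (by exact_mod_cast (Ne.symm hmk))
      simpa using this.isUnit.map (algebraMap ℚ A)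
    have hdvd : ℓ ∣ D ℓ * a₀ * b₀ := by
      rw [← hunit.dvd_mul_left]
      exact ⟨-D.wronskian a₀ b₀, by
        linear_combination (mul_eq_zero.mp key).resolve_left (pow_ne_zero _ hℓ.ne_zero)⟩
    rcases hℓ.dvd_or_dvd hdvd with h | h
    · exact (hℓ.dvd_or_dvd h).elim hDℓ ha₀
    · exact hb₀ h
  exact (hℓ.pow_dvd_of_dvd_mul_right n ha₀ hn).mul_right b₀

end Derivation

namespace MvPolynomial

theorem IsHomogeneous.le_of_dvd {σ R : Type*} [CommRing R] [IsDomain R]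
    {p q : MvPolynomial σ R} {m n : ℕ} (hp : p.IsHomogeneous m) (hq : q.IsHomogeneous n)
    (hq0 : q ≠ 0) (hpq : p ∣ q) : m ≤ n := by
  rw [← hp.totalDegree (ne_zero_of_dvd_ne_zero hq0 hpq), ← hq.totalDegree hq0]
  exact totalDegree_le_of_dvd_of_isDomain hpq hq0

section LinearForm

variable {k : Type*} [Field k]

theorem IsHomogeneous.irreducible_of_one {σ : Type*} {ℓ : MvPolynomial σ k}
    (hℓ : ℓ.IsHomogeneous 1) (hℓ0 : ℓ ≠ 0) : Irreducible ℓ := by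
  refine irreducible_of_totalDegree_eq_one (hℓ.totalDegree hℓ0) fun x hx => ?_
  refine isUnit_iff_ne_zero.mpr fun hx0 => hℓ0 ?_
  ext i
  simpa [hx0] using hx i

theorem IsHomogeneous.isRelPrime_of_forall_ne_C_mul {σ : Type*} {ℓ ℓ' : MvPolynomial σ k}
    (hℓ : ℓ.IsHomogeneous 1) (hℓ0 : ℓ ≠ 0) (hℓ' : ℓ'.IsHomogeneous 1) (hℓ'0 : ℓ' ≠ 0)
    (h : ∀ a : k, ℓ' ≠ C a * ℓ) : IsRelPrime ℓ ℓ' := by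
  refine (hℓ.irreducible_of_one hℓ0).isRelPrime_iff_not_dvd.mpr ?_
  rintro ⟨g, rfl⟩
  have hg : g.totalDegree = 0 := by
    have := totalDegree_mul_of_isDomain hℓ0 (right_ne_zero_of_mul hℓ'0)
    rw [hℓ'.totalDegree hℓ'0, hℓ.totalDegree hℓ0] at this
    omega
  exact h (coeff 0 g) (by rw [mul_comm, ← totalDegree_eq_zero_iff_eq_C.mp hg])

theorem IsHomogeneous.exists_eq_C_mul_X_add_C_mul_X {ℓ : MvPolynomial (Fin 2) k}
    (hℓ : ℓ.IsHomogeneous 1) : ∃ a b : k, ℓ = C a * X 0 + C b * X 1 := by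
  have hconst (i : Fin 2) : pderiv i ℓ = C (coeff 0 (pderiv i ℓ)) :=
    totalDegree_eq_zero_iff_eq_C.mp
      ((totalDegree_zero_iff_isHomogeneous _).mpr (hℓ.pderiv (i := i)))
  refine ⟨coeff 0 (pderiv 0 ℓ), coeff 0 (pderiv 1 ℓ), ?_⟩
  have euler := hℓ.sum_X_mul_pderiv
  rw [Fin.sum_univ_two, one_smul, hconst 0, hconst 1] at euler
  exact euler.symm.trans (by ring)

end LinearForm

variable {R : Type*} [CommRing R]

noncomputable def jacobian (ℓ : MvPolynomial (Fin 2) R) :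
    Derivation R (MvPolynomial (Fin 2) R) (MvPolynomial (Fin 2) R) :=
  pderiv 0 ℓ • pderiv 1 - pderiv 1 ℓ • pderiv 0

theorem jacobian_apply (ℓ f : MvPolynomial (Fin 2) R) :
    jacobian ℓ f = pderiv 0 ℓ * pderiv 1 f - pderiv 1 ℓ * pderiv 0 f :=
  rfl

theorem jacobian_self (ℓ : MvPolynomial (Fin 2) R) : jacobian ℓ ℓ = 0 := by
  rw [jacobian_apply]
  ring

theorem IsHomogeneous.jacobian {ℓ f : MvPolynomial (Fin 2) R} {n : ℕ} (hℓ : ℓ.IsHomogeneous 1)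
    (hf : f.IsHomogeneous n) : (jacobian ℓ f).IsHomogeneous (n - 1) := by
  rw [jacobian_apply, ← zero_add (n - 1)]
  exact (hℓ.pderiv.mul hf.pderiv).sub (hℓ.pderiv.mul hf.pderiv)

theorem IsHomogeneous.wronskian_jacobian {ℓ a b : MvPolynomial (Fin 2) R} {n : ℕ}
    (hℓ : ℓ.IsHomogeneous 1) (ha : a.IsHomogeneous n) (hb : b.IsHomogeneous n) :
    ((MvPolynomial.jacobian ℓ).wronskian a b).IsHomogeneous (n + (n - 1)) :=
  (ha.mul (hℓ.jacobian hb)).sub (hb.mul (hℓ.jacobian ha))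

theorem jacobian_C_mul_X_add_C_mul_X (a b a' b' : R) :
    jacobian (C a * X 0 + C b * X 1) (C a' * X 0 + C b' * X 1) = C (a * b' - b * a') := by
  simp [jacobian_apply]

theorem jacobian_apply_ne_zero {k : Type*} [Field k] {ℓ ℓ' : MvPolynomial (Fin 2) k}
    (hℓ : ℓ.IsHomogeneous 1) (hℓ' : ℓ'.IsHomogeneous 1) (hℓ'0 : ℓ' ≠ 0)
    (h : ∀ a : k, ℓ ≠ C a * ℓ') : jacobian ℓ ℓ' ≠ 0 := by
  obtain ⟨a, b, rfl⟩ := hℓ.exists_eq_C_mul_X_add_C_mul_X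
  obtain ⟨a', b', rfl⟩ := hℓ'.exists_eq_C_mul_X_add_C_mul_X
  intro hJ
  rw [jacobian_C_mul_X_add_C_mul_X, C_eq_zero, sub_eq_zero] at hJ
  obtain ⟨c, rfl, rfl⟩ : ∃ c, a = c * a' ∧ b = c * b' := by
    rcases eq_or_ne a' 0 with rfl | ha'
    · have hb' : b' ≠ 0 := by rintro rfl; simp at hℓ'0
      refine ⟨b / b', ?_, by field_simp⟩
      simpa [hb'] using hJ
    · refine ⟨a / a', by field_simp, ?_⟩
      field_simp
      linear_combination hJ.symm
  exact h c (by simp only [C_mul]; ring)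

theorem IsHomogeneous.pow_mul_of_one {σ : Type*} {ℓ f : MvPolynomial σ R} {m : ℕ}
    (hℓ : ℓ.IsHomogeneous 1) (hf : f.IsHomogeneous m) (n : ℕ) :
    (ℓ ^ n * f).IsHomogeneous (n + m) := by
  simpa using (hℓ.pow n).mul hf

end MvPolynomial

section Exponents

variable {k : Type*} [Field k] {ℓ₁ ℓ₂ ℓ₃ R T U : MvPolynomial (Fin 2) k} {r t u d dR dT : ℕ}

theorem add_le_of_wronskian_jacobian_eq_zero [CharZero k]
    (hℓ₁ : ℓ₁.IsHomogeneous 1) (hℓ₁0 : ℓ₁ ≠ 0) (hℓ₂ : ℓ₂.IsHomogeneous 1) (hℓ₂0 : ℓ₂ ≠ 0)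
    (h12 : ∀ a : k, ℓ₂ ≠ C a * ℓ₁) (hR0 : R ≠ 0) (hT0 : T ≠ 0) (hT : T.IsHomogeneous dT)
    (hdT : t + dT = d) (hW : (jacobian ℓ₂).wronskian (ℓ₁ ^ r * R) (ℓ₂ ^ t * T) = 0) :
    r + t ≤ d := by
  have hJ : ¬ ℓ₁ ∣ jacobian ℓ₂ ℓ₁ := fun h =>
    absurd (hℓ₁.le_of_dvd (hℓ₂.jacobian hℓ₁) (jacobian_apply_ne_zero hℓ₂ hℓ₁ hℓ₁0 h12) h)
      (by norm_num)
  have hdvd : ℓ₁ ^ r ∣ ℓ₂ ^ t * T :=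
    (jacobian ℓ₂).pow_dvd_of_wronskian_eq_zero (hℓ₁.irreducible_of_one hℓ₁0).prime hJ
      (mul_ne_zero (pow_ne_zero r hℓ₁0) hR0) (mul_ne_zero (pow_ne_zero t hℓ₂0) hT0) hW
      (dvd_mul_right _ _)
  have hrel := (hℓ₁.isRelPrime_of_forall_ne_C_mul hℓ₁0 hℓ₂ hℓ₂0 h12).pow (m := r) (n := t)
  have := (hℓ₁.pow r).le_of_dvd hT hT0 (hrel.dvd_of_dvd_mul_left hdvd)
  omega

theorem sum_le_of_wronskian_jacobian_ne_zero
    (hℓ₁ : ℓ₁.IsHomogeneous 1) (hℓ₂ : ℓ₂.IsHomogeneous 1) (hℓ₃ : ℓ₃.IsHomogeneous 1)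
    (h12 : IsRelPrime ℓ₁ ℓ₂) (h13 : IsRelPrime ℓ₁ ℓ₃) (h23 : IsRelPrime ℓ₂ ℓ₃)
    (hR : R.IsHomogeneous dR) (hT : T.IsHomogeneous dT) (hdR : r + dR = d) (hdT : t + dT = d)
    (heq : ℓ₁ ^ r * R + ℓ₂ ^ t * T + ℓ₃ ^ u * U = 0)
    (hW : (jacobian ℓ₂).wronskian (ℓ₁ ^ r * R) (ℓ₂ ^ t * T) ≠ 0) :
    (r - 1) + t + (u - 1) ≤ 2 * d - 1 := by
  set D := jacobian ℓ₂
  have h1 : ℓ₁ ^ (r - 1) ∣ D.wronskian (ℓ₁ ^ r * R) (ℓ₂ ^ t * T) :=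
    D.pow_pred_dvd_wronskian_pow_mul ℓ₁ R _ r
  have h2 : ℓ₂ ^ t ∣ D.wronskian (ℓ₁ ^ r * R) (ℓ₂ ^ t * T) :=
    D.pow_dvd_wronskian_mul_pow_of_apply_eq_zero (jacobian_self ℓ₂) _ T t
  have h3 : ℓ₃ ^ (u - 1) ∣ D.wronskian (ℓ₁ ^ r * R) (ℓ₂ ^ t * T) := by
    rw [D.wronskian_eq_of_add_add_eq_zero heq]
    exact D.pow_pred_dvd_wronskian_pow_mul ℓ₃ U _ u
  have hdvd : ℓ₁ ^ (r - 1) * ℓ₂ ^ t * ℓ₃ ^ (u - 1) ∣ D.wronskian (ℓ₁ ^ r * R) (ℓ₂ ^ t * T) :=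
    (h13.pow.mul_left h23.pow).mul_dvd (h12.pow.mul_dvd h1 h2) h3
  have hWhom := hℓ₂.wronskian_jacobian (hdR ▸ hℓ₁.pow_mul_of_one hR r)
    (hdT ▸ hℓ₂.pow_mul_of_one hT t)
  have := (((hℓ₁.pow _).mul (hℓ₂.pow _)).mul (hℓ₃.pow _)).le_of_dvd hWhom hW hdvd
  omega

end Exponents

theorem min_exponent_le_general (k : Type*) [Field k] [CharZero k]
    (R T U ℓ₁ ℓ₂ ℓ₃ : MvPolynomial (Fin 2) k)
    (hR0 : R ≠ 0) (hT0 : T ≠ 0)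
    (dR dT : ℕ) (hR : R.IsHomogeneous dR) (hT : T.IsHomogeneous dT)
    (hℓ₁0 : ℓ₁ ≠ 0) (hℓ₂0 : ℓ₂ ≠ 0) (hℓ₃0 : ℓ₃ ≠ 0)
    (hℓ₁ : ℓ₁.IsHomogeneous 1) (hℓ₂ : ℓ₂.IsHomogeneous 1) (hℓ₃ : ℓ₃.IsHomogeneous 1)
    (h12 : ∀ a : k, ℓ₂ ≠ C a * ℓ₁) (h13 : ∀ a : k, ℓ₃ ≠ C a * ℓ₁)
    (h23 : ∀ a : k, ℓ₃ ≠ C a * ℓ₂)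
    (r t u d : ℕ) (hdR : r + dR = d) (hdT : t + dT = d)
    (heq : ℓ₁ ^ r * R + ℓ₂ ^ t * T + ℓ₃ ^ u * U = 0) :
    min (min r t) u ≤ (2 * d + 1) / 3 := by
  rw [Nat.le_div_iff_mul_le three_pos]
  by_cases hW : (jacobian ℓ₂).wronskian (ℓ₁ ^ r * R) (ℓ₂ ^ t * T) = 0
  · have := add_le_of_wronskian_jacobian_eq_zero hℓ₁ hℓ₁0 hℓ₂ hℓ₂0 h12 hR0 hT0 hT hdT hW
    omega
  · have := sum_le_of_wronskian_jacobian_ne_zero hℓ₁ hℓ₂ hℓ₃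
      (hℓ₁.isRelPrime_of_forall_ne_C_mul hℓ₁0 hℓ₂ hℓ₂0 h12)
      (hℓ₁.isRelPrime_of_forall_ne_C_mul hℓ₁0 hℓ₃ hℓ₃0 h13)
      (hℓ₂.isRelPrime_of_forall_ne_C_mul hℓ₂0 hℓ₃ hℓ₃0 h23) hR hT hdR hdT heq hW
    omega

/-- If `R, T, U ∈ k[x₂,x₃]` are nonzero homogeneous polynomials, `ℓ₁, ℓ₂, ℓ₃` are pairwise
independent linear forms, and `ℓ₁^r R + ℓ₂^t T + ℓ₃^u U = 0`, where each summand has total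
degree `d`, then `min {r, t, u} ≤ ⌊(2d+1)/3⌋`. -/
theorem min_exponent_le (k : Type*) [Field k] [CharZero k]
    (R T U ℓ₁ ℓ₂ ℓ₃ : MvPolynomial (Fin 2) k)
    (hR0 : R ≠ 0) (hT0 : T ≠ 0) (hU0 : U ≠ 0)
    (dR dT dU : ℕ) (hR : R.IsHomogeneous dR) (hT : T.IsHomogeneous dT)
    (hU : U.IsHomogeneous dU)
    (hℓ₁0 : ℓ₁ ≠ 0) (hℓ₂0 : ℓ₂ ≠ 0) (hℓ₃0 : ℓ₃ ≠ 0)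
    (hℓ₁ : ℓ₁.IsHomogeneous 1) (hℓ₂ : ℓ₂.IsHomogeneous 1) (hℓ₃ : ℓ₃.IsHomogeneous 1)
    (h12 : ∀ a : k, ℓ₂ ≠ C a * ℓ₁) (h13 : ∀ a : k, ℓ₃ ≠ C a * ℓ₁)
    (h23 : ∀ a : k, ℓ₃ ≠ C a * ℓ₂)
    (r t u d : ℕ) (hdR : r + dR = d) (hdT : t + dT = d) (hdU : u + dU = d)
    (heq : ℓ₁ ^ r * R + ℓ₂ ^ t * T + ℓ₃ ^ u * U = 0) :
    min (min r t) u ≤ (2 * d + 1) / 3 :=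
  min_exponent_le_general k R T U ℓ₁ ℓ₂ ℓ₃ hR0 hT0 dR dT hR hT hℓ₁0 hℓ₂0 hℓ₃0 hℓ₁ hℓ₂ hℓ₃ h12 h13
    h23 r t u d hdR hdT heq
end

section
/- Let k be a field of characteristic zero, let p ≥ 1 be an integer, and let R, T, U ∈ k[x2,x3] be nonzero weighted homogeneous polynomials for the weights w(x2) = p, w(x3) = 1. Assume there exist natural numbers r, t, u, m such that the weighted degrees satisfy deg R + rp = deg T + tp = deg U + up = m. Suppose that for some distinct nonzero c, c' ∈ k we have x2^r R + (x2 + c x3^p)^t T + (x2 + c' x3^p)^u U = 0. Write m = αp + β with 0 ≤ β < p (the Euclidean division of m by p) and assume α ≥ 2. Then min{rp, tp, up} ≤ (3/4)·m. -/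
/-!
Substituting `x₂ ↦ X`, `x₃ ↦ 1` turns `R, T, U` into `F, G, H ∈ k[X]` and the relation into
`a + b + e = 0` with `a = X^r F`, `b = (X + c)^t G`, `e = (X + c')^u H`; weighted homogeneity
gives `r + deg F ≤ α` and `t + deg G ≤ α`. The Wronskian `W = ab' - a'b` also equals `W(b, e)`,
so it is divisible by `X^(r-1) (X+c)^(t-1) (X+c')^(u-1)`, while `deg W ≤ 2α - 2` because the
leading terms cancel. Hence either `W = 0`, so that `a` and `b` are proportional and
`X^r (X+c)^t ∣ b` forces `r + t ≤ α`, or `r + t + u ≤ 2α + 1`. Either way `4 min(r, t, u) ≤ 3α`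
as soon as `α ≥ 2`, and multiplying by `p` gives the claim.
-/

namespace MvPolynomial

variable {k : Type*} [CommSemiring k] {p n : ℕ} {S : MvPolynomial (Fin 2) k}

theorem weight_fin_two (p q : ℕ) (d : Fin 2 →₀ ℕ) :
    Finsupp.weight ![p, q] d = d 0 * p + d 1 * q := by
  simp [Finsupp.weight_apply, Finsupp.sum_fintype, Fin.sum_univ_two]

theorem aeval_X_one_eq_sum (S : MvPolynomial (Fin 2) k) :
    aeval ![(Polynomial.X : Polynomial k), 1] S =
      ∑ d ∈ S.support, Polynomial.monomial (d 0) (S.coeff d) := by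
  simp [aeval_def, eval₂_eq', Fin.prod_univ_two, Polynomial.C_mul_X_pow_eq_monomial]

theorem IsWeightedHomogeneous.coeff_aeval_X_one (h : S.IsWeightedHomogeneous ![p, 1] n)
    {d : Fin 2 →₀ ℕ} (hd : d ∈ S.support) :
    (aeval ![(Polynomial.X : Polynomial k), 1] S).coeff (d 0) = S.coeff d := by
  rw [aeval_X_one_eq_sum, Polynomial.finsetSum_coeff, Finset.sum_eq_single d]
  · simp
  · intro d' hd' hne
    rw [Polynomial.coeff_monomial, if_neg]
    intro h0
    have w := h (mem_support_iff.1 hd)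
    have w' := h (mem_support_iff.1 hd')
    rw [weight_fin_two] at w w'
    rw [h0] at w'
    exact hne (Finsupp.ext fun i => by fin_cases i <;> simp <;> omega)
  · exact fun h' => absurd hd h'

theorem IsWeightedHomogeneous.aeval_X_one_ne_zero (h : S.IsWeightedHomogeneous ![p, 1] n)
    (hS : S ≠ 0) : aeval ![(Polynomial.X : Polynomial k), 1] S ≠ 0 := by
  obtain ⟨d, hd⟩ := support_nonempty.2 hS
  intro h0
  have := h.coeff_aeval_X_one hd
  rw [h0, Polynomial.coeff_zero] at this
  exact mem_support_iff.1 hd this.symm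

theorem IsWeightedHomogeneous.natDegree_aeval_X_one_le (h : S.IsWeightedHomogeneous ![p, 1] n)
    (hp : 0 < p) : (aeval ![(Polynomial.X : Polynomial k), 1] S).natDegree ≤ n / p := by
  rw [aeval_X_one_eq_sum]
  refine Polynomial.natDegree_sum_le_of_forall_le _ _ fun d hd =>
    (Polynomial.natDegree_monomial_le _).trans ((Nat.le_div_iff_mul_le hp).2 ?_)
  have w := h (mem_support_iff.1 hd)
  rw [weight_fin_two] at w
  omega

theorem IsWeightedHomogeneous.add_natDegree_aeval_X_one_le
    (h : S.IsWeightedHomogeneous ![p, 1] n) {s α β : ℕ} (hs : n + s * p = α * p + β)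
    (hβ : β < p) : s + (aeval ![(Polynomial.X : Polynomial k), 1] S).natDegree ≤ α := by
  have hp : 0 < p := by omega
  have hα : (n + s * p) / p = α := by
    rw [hs, mul_comm, Nat.mul_add_div hp, Nat.div_eq_of_lt hβ, add_zero]
  rw [Nat.add_mul_div_right _ _ hp] at hα
  have := h.natDegree_aeval_X_one_le hp
  omega

end MvPolynomial

namespace Polynomial

section CommRing

variable {R : Type*} [CommRing R]

theorem wronskian_mul_mul (g a b : R[X]) :
    wronskian (g * a) (g * b) = g ^ 2 * wronskian a b := by
  simp only [wronskian, derivative_mul]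
  ring

theorem wronskian_sub_smul_self_right (a b : R[X]) (x : R) :
    wronskian a (b - x • a) = wronskian a b := by
  rw [← wronskianBilin_apply, map_sub, map_smul, wronskianBilin_apply, wronskianBilin_apply,
    wronskian_self_eq_zero, smul_zero, sub_zero]

theorem pow_sub_one_dvd_wronskian_left {q a : R[X]} {n : ℕ} (h : q ^ n ∣ a) (b : R[X]) :
    q ^ (n - 1) ∣ wronskian a b :=
  dvd_sub (((pow_dvd_pow q (n.sub_le 1)).trans h).mul_right _)
    ((pow_sub_one_dvd_derivative_of_pow_dvd h).mul_right _)

theorem pow_sub_one_dvd_wronskian_right {q b : R[X]} {n : ℕ} (a : R[X]) (h : q ^ n ∣ b) :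
    q ^ (n - 1) ∣ wronskian a b := by
  rw [← wronskian_neg_eq, dvd_neg]
  exact pow_sub_one_dvd_wronskian_left h a

end CommRing

variable {k : Type*} [Field k]

theorem natDegree_wronskian_add_two_le {a b : k[X]} {n : ℕ} (hw : wronskian a b ≠ 0)
    (ha : a.natDegree ≤ n) (hb : b.natDegree ≤ n) :
    (wronskian a b).natDegree + 2 ≤ 2 * n := by
  obtain hlt | rfl := ha.lt_or_eq
  · have := natDegree_wronskian_lt_add hw
    omega
  -- subtracting a multiple of `a` kills the top coefficient of `b` without changing `W(a, b)`
  set b₁ := b - (b.coeff a.natDegree / a.leadingCoeff) • a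
  have ha0 : a ≠ 0 := by rintro rfl; simp at hw
  have hw₁ : wronskian a b₁ = wronskian a b := wronskian_sub_smul_self_right a b _
  have hb₁ : b₁ ≠ 0 := by rintro h; rw [h, wronskian_zero_right] at hw₁; exact hw hw₁.symm
  have hcoeff : b₁.coeff a.natDegree = 0 := by
    rw [coeff_sub, coeff_smul, smul_eq_mul, coeff_natDegree,
      div_mul_cancel₀ _ (leadingCoeff_ne_zero.2 ha0), sub_self]
  have hdeg : b₁.natDegree < a.natDegree := by
    refine lt_of_le_of_ne ?_ fun h => leadingCoeff_ne_zero.2 hb₁ (by rwa [leadingCoeff, h])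
    exact (natDegree_sub_le _ _).trans (max_le hb (natDegree_smul_le _ _))
  have := natDegree_wronskian_lt_add (hw₁.symm ▸ hw)
  rw [hw₁] at this
  omega

theorem exists_eq_C_mul_of_wronskian_eq_zero [CharZero k] {a b : k[X]} (ha : a ≠ 0)
    (hw : wronskian a b = 0) : ∃ x : k, b = C x * a := by
  obtain ⟨a₁, b₁, g, hrel, rfl, rfl⟩ := UniqueFactorizationMonoid.exists_reduced_factors a ha b
  have hg : g ≠ 0 := left_ne_zero_of_mul ha
  have hw₁ : wronskian a₁ b₁ = 0 := by
    rw [wronskian_mul_mul] at hw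
    exact (mul_eq_zero.1 hw).resolve_left (pow_ne_zero 2 hg)
  obtain ⟨ha₁, hb₁⟩ := (isRelPrime_iff_isCoprime.1 hrel).wronskian_eq_zero_iff.1 hw₁
  rw [eq_C_of_derivative_eq_zero ha₁] at ha ⊢
  rw [eq_C_of_derivative_eq_zero hb₁]
  have : a₁.coeff 0 ≠ 0 := fun h => by simp [h] at ha
  exact ⟨b₁.coeff 0 / a₁.coeff 0, by rw [mul_left_comm, ← C_mul, div_mul_cancel₀ _ this]⟩

theorem add_add_le_of_add_add_eq_zero [CharZero k] {x y z : k} (hxy : x ≠ y) (hyz : y ≠ z)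
    (hxz : x ≠ z) {a b e : k[X]} (ha : a ≠ 0) (hb : b ≠ 0) (hsum : a + b + e = 0) {n r t u : ℕ}
    (hna : a.natDegree ≤ n) (hnb : b.natDegree ≤ n) (hra : (X - C x) ^ r ∣ a)
    (htb : (X - C y) ^ t ∣ b) (hue : (X - C z) ^ u ∣ e) :
    r + t + u ≤ 2 * n + 1 ∨ r + t ≤ n := by
  have hcop {v w : k} (h : v ≠ w) (i j : ℕ) : IsCoprime ((X - C v) ^ i) ((X - C w) ^ j) :=
    (isCoprime_X_sub_C_of_isUnit_sub (sub_ne_zero.2 h).isUnit).pow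
  by_cases hw : wronskian a b = 0
  · right
    obtain ⟨μ, rfl⟩ := exists_eq_C_mul_of_wronskian_eq_zero ha hw
    have hdvd : (X - C x) ^ r * (X - C y) ^ t ∣ C μ * a :=
      (hcop hxy r t).mul_dvd (hra.mul_left _) htb
    have := natDegree_le_of_dvd hdvd hb
    simp only [ne_eq, pow_eq_zero_iff', X_sub_C_ne_zero, false_and, not_false_eq_true,
      natDegree_mul, natDegree_pow, natDegree_sub_C, natDegree_X, mul_one] at this
    omega
  · left
    -- `W(a, b) = W(b, e)`, so the Wronskian sees the high-order roots of all three terms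
    have hdvd :
        (X - C x) ^ (r - 1) * (X - C y) ^ (t - 1) * (X - C z) ^ (u - 1) ∣ wronskian a b := by
      refine ((hcop hxz _ _).mul_left (hcop hyz _ _)).mul_dvd
        ((hcop hxy _ _).mul_dvd (pow_sub_one_dvd_wronskian_left hra b)
          (pow_sub_one_dvd_wronskian_right a htb)) ?_
      rw [wronskian_eq_of_sum_zero hsum]
      exact pow_sub_one_dvd_wronskian_right b hue
    have := natDegree_le_of_dvd hdvd hw
    simp only [ne_eq, mul_eq_zero, pow_eq_zero_iff', X_sub_C_ne_zero, false_and, or_self,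
      not_false_eq_true, natDegree_mul, natDegree_pow, natDegree_sub_C, natDegree_X, mul_one]
      at this
    have := natDegree_wronskian_add_two_le hw hna hnb
    omega

theorem four_mul_min_le_of_add_add_eq_zero [CharZero k] {c d : k} (hc : c ≠ 0) (hd : d ≠ 0)
    (hcd : c ≠ d) {F G H : k[X]} (hF : F ≠ 0) (hG : G ≠ 0) {n r t u : ℕ} (hn : 2 ≤ n)
    (hrF : r + F.natDegree ≤ n) (htG : t + G.natDegree ≤ n)
    (E : X ^ r * F + (X + C c) ^ t * G + (X + C d) ^ u * H = 0) :
    4 * min (min r t) u ≤ 3 * n := by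
  have hX (x : k) : X + C x = X - C (-x) := by simp
  have key := add_add_le_of_add_add_eq_zero (x := 0) (r := r) (t := t) (u := u)
    (neg_ne_zero.2 hc).symm (neg_injective.ne hcd) (neg_ne_zero.2 hd).symm
    (mul_ne_zero (pow_ne_zero _ X_ne_zero) hF)
    (mul_ne_zero (pow_ne_zero _ (X_add_C_ne_zero c)) hG) E
    (natDegree_mul_le.trans (by simpa using hrF)) (natDegree_mul_le.trans (by simpa using htG))
    (by simp) (by rw [← hX]; exact dvd_mul_right _ _) (by rw [← hX]; exact dvd_mul_right _ _)
  omega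

end Polynomial

open MvPolynomial

theorem weighted_min_exponent_le_general (k : Type*) [Field k] [CharZero k]
    (p : ℕ)
    (R T U : MvPolynomial (Fin 2) k) (hR0 : R ≠ 0) (hT0 : T ≠ 0)
    (dR dT : ℕ)
    (hR : R.IsWeightedHomogeneous ![p, 1] dR)
    (hT : T.IsWeightedHomogeneous ![p, 1] dT)
    (r t u m : ℕ) (hmR : dR + r * p = m) (hmT : dT + t * p = m)
    (c c' : k) (hc : c ≠ 0) (hc' : c' ≠ 0) (hcc' : c ≠ c')
    (heq : X 0 ^ r * R + (X 0 + C c * X 1 ^ p) ^ t * T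
        + (X 0 + C c' * X 1 ^ p) ^ u * U = 0)
    (α β : ℕ) (hm : m = α * p + β) (hβ : β < p) (hα : 2 ≤ α) :
    ((min (min (r * p) (t * p)) (u * p) : ℕ) : ℚ) ≤ 3 / 4 * (m : ℚ) := by
  have E : Polynomial.X ^ r * aeval ![(Polynomial.X : Polynomial k), 1] R
      + (Polynomial.X + Polynomial.C c) ^ t * aeval ![(Polynomial.X : Polynomial k), 1] T
      + (Polynomial.X + Polynomial.C c') ^ u * aeval ![(Polynomial.X : Polynomial k), 1] U = 0 := by
    simpa [Polynomial.algebraMap_eq] using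
      congrArg (aeval ![(Polynomial.X : Polynomial k), 1]) heq
  have key := Polynomial.four_mul_min_le_of_add_add_eq_zero hc hc' hcc'
    (hR.aeval_X_one_ne_zero hR0) (hT.aeval_X_one_ne_zero hT0) hα
    (hR.add_natDegree_aeval_X_one_le (hmR.trans hm) hβ)
    (hT.add_natDegree_aeval_X_one_le (hmT.trans hm) hβ) E
  have hN : 4 * min (min (r * p) (t * p)) (u * p) ≤ 3 * m := by
    rw [← min_mul_of_nonneg _ _ p.zero_le, ← min_mul_of_nonneg _ _ p.zero_le]
    have := Nat.mul_le_mul_right p key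
    rw [hm]
    nlinarith
  have : ((4 * min (min (r * p) (t * p)) (u * p) : ℕ) : ℚ) ≤ ((3 * m : ℕ) : ℚ) := by
    exact_mod_cast hN
  simp only [Nat.cast_mul, Nat.cast_ofNat] at this
  linarith

/-- Weighted version of the three-term lemma: if `R, T, U` are nonzero weighted homogeneous
polynomials (with `x₂` of weight `p` and `x₃` of weight `1`) with
`deg R + rp = deg T + tp = deg U + up = m`, if
`x₂^r R + (x₂ + c x₃^p)^t T + (x₂ + c' x₃^p)^u U = 0` for distinct nonzero `c, c'`, and if
`m = αp + β` with `β < p` and `α ≥ 2`, then `min {rp, tp, up} ≤ (3/4) m`. -/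
theorem weighted_min_exponent_le (k : Type*) [Field k] [CharZero k]
    (p : ℕ) (hp : 1 ≤ p)
    (R T U : MvPolynomial (Fin 2) k) (hR0 : R ≠ 0) (hT0 : T ≠ 0) (hU0 : U ≠ 0)
    (dR dT dU : ℕ)
    (hR : R.IsWeightedHomogeneous ![p, 1] dR)
    (hT : T.IsWeightedHomogeneous ![p, 1] dT)
    (hU : U.IsWeightedHomogeneous ![p, 1] dU)
    (r t u m : ℕ) (hmR : dR + r * p = m) (hmT : dT + t * p = m) (hmU : dU + u * p = m)
    (c c' : k) (hc : c ≠ 0) (hc' : c' ≠ 0) (hcc' : c ≠ c')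
    (heq : X 0 ^ r * R + (X 0 + C c * X 1 ^ p) ^ t * T
        + (X 0 + C c' * X 1 ^ p) ^ u * U = 0)
    (α β : ℕ) (hm : m = α * p + β) (hβ : β < p) (hα : 2 ≤ α) :
    ((min (min (r * p) (t * p)) (u * p) : ℕ) : ℚ) ≤ 3 / 4 * (m : ℚ) :=
  weighted_min_exponent_le_general k p R T U hR0 hT0 dR dT hR hT r t u m hmR hmT c c' hc hc' hcc'
    heq α β hm hβ hα
end

section
/- Let k be a field of characteristic zero, let p ≥ 1 be an integer, and let R, T, U ∈ k[x2,x3] be nonzero weighted homogeneous polynomials for the weights w(x2) = p, w(x3) = 1. Assume there exist natural numbers r, t, u, m such that the weighted degrees satisfy deg R + rp = deg T + tp = deg U + u = m. Suppose that for some nonzero c ∈ k we have x2^r R + (x2 + c x3^p)^t T + x3^u U = 0. Write m = αp + β with 0 ≤ β < p (the Euclidean division of m by p) and assume α ≥ 2. Then min{rp, tp, u} < (4/5)·m. -/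
/-!
Setting `x₃ = 1` turns the identity into `X^r R' + (X + c)^t T' + U' = 0` in `k[X]`, with
`p · deg T' ≤ m - tp` and `p · deg U' ≤ m - u`. Mason–Stothers, applied after dividing out the
common factor of the three terms, bounds `deg (X^r R')` by the degree of the radical of the first
two terms plus `deg U'`; the radical has degree at most `2 + deg R' + deg T'`, so
`r ≤ 1 + deg T' + deg U'`. If `tp, u ≥ 4m/5` then `p · deg T', p · deg U' ≤ m/5`, and as each of
them is either `0` or at least `p`, this together with `m ≥ 2p` forces `rp < 4m/5`.
-/

open MvPolynomial

open scoped Polynomial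

namespace MvPolynomial

variable {k : Type*} [Field k]

noncomputable def dehomogenize : MvPolynomial (Fin 2) k →ₐ[k] k[X] :=
  aeval ![Polynomial.X, 1]

@[simp] lemma dehomogenize_X_zero : dehomogenize (X 0 : MvPolynomial (Fin 2) k) = Polynomial.X :=
  aeval_X _ _

@[simp] lemma dehomogenize_X_one : dehomogenize (X 1 : MvPolynomial (Fin 2) k) = 1 :=
  aeval_X _ _

@[simp] lemma dehomogenize_C (c : k) :
    dehomogenize (C c : MvPolynomial (Fin 2) k) = Polynomial.C c :=
  aeval_C _ _

lemma coeff_dehomogenize (F : MvPolynomial (Fin 2) k) (j : ℕ) :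
    (dehomogenize F).coeff j = ∑ d ∈ F.support with d 0 = j, F.coeff d := by
  rw [dehomogenize, aeval_def, eval₂_eq', Polynomial.finsetSum_coeff, Finset.sum_filter]
  refine Finset.sum_congr rfl fun d _ => ?_
  simp [Fin.prod_univ_two, eq_comm]

namespace IsWeightedHomogeneous

variable {p n : ℕ} {F : MvPolynomial (Fin 2) k}

lemma weight_of_mem_support (hF : F.IsWeightedHomogeneous ![p, 1] n) {d : Fin 2 →₀ ℕ}
    (hd : d ∈ F.support) : d 0 * p + d 1 = n := by
  simpa [Finsupp.weight_apply, Finsupp.sum_fintype, Fin.sum_univ_two] using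
    hF (mem_support_iff.mp hd)

lemma eq_of_mem_support_of_apply_zero_eq (hF : F.IsWeightedHomogeneous ![p, 1] n)
    {d e : Fin 2 →₀ ℕ} (hd : d ∈ F.support) (he : e ∈ F.support) (h0 : d 0 = e 0) : d = e := by
  have hd' := hF.weight_of_mem_support hd
  have he' := hF.weight_of_mem_support he
  ext i
  fin_cases i
  · exact h0
  · simp only [Fin.mk_one]
    rw [h0] at hd'
    omega

lemma coeff_dehomogenize_of_mem_support (hF : F.IsWeightedHomogeneous ![p, 1] n)
    {d : Fin 2 →₀ ℕ} (hd : d ∈ F.support) : (dehomogenize F).coeff (d 0) = F.coeff d := by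
  rw [coeff_dehomogenize, Finset.sum_eq_single_of_mem d (by simpa using hd)]
  intro e he hed
  rw [Finset.mem_filter] at he
  exact absurd (hF.eq_of_mem_support_of_apply_zero_eq he.1 hd he.2) hed

lemma dehomogenize_ne_zero (hF : F.IsWeightedHomogeneous ![p, 1] n) (hF0 : F ≠ 0) :
    dehomogenize F ≠ 0 := by
  obtain ⟨d, hd⟩ := support_nonempty.mpr hF0
  intro h
  have := hF.coeff_dehomogenize_of_mem_support hd
  rw [h, Polynomial.coeff_zero, eq_comm] at this
  exact mem_support_iff.mp hd this

lemma mul_natDegree_dehomogenize_le (hF : F.IsWeightedHomogeneous ![p, 1] n) (hF0 : F ≠ 0) :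
    p * (dehomogenize F).natDegree ≤ n := by
  have hlead := Polynomial.leadingCoeff_ne_zero.mpr (hF.dehomogenize_ne_zero hF0)
  rw [Polynomial.leadingCoeff, coeff_dehomogenize] at hlead
  obtain ⟨d, hd, -⟩ := Finset.exists_ne_zero_of_sum_ne_zero hlead
  rw [Finset.mem_filter] at hd
  have := hF.weight_of_mem_support hd.1
  rw [← hd.2]
  nlinarith

end IsWeightedHomogeneous

end MvPolynomial

namespace UniqueFactorizationMonoid

lemma radical_pow_mul_dvd {M : Type*} [CommMonoidWithZero M] [NormalizationMonoid M]
    [UniqueFactorizationMonoid M] (q a : M) (n : ℕ) : radical (q ^ n * a) ∣ q * a :=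
  radical_mul_dvd.trans (mul_dvd_mul (radical_pow_dvd.trans radical_dvd_self) radical_dvd_self)

end UniqueFactorizationMonoid

open UniqueFactorizationMonoid

namespace Polynomial

variable {k : Type*} [Field k] [DecidableEq k]

lemma natDegree_radical_pos {f : k[X]} (hf : 0 < f.natDegree) : 0 < (radical f).natDegree := by
  by_contra! h
  have hunit : IsUnit (radical f) := by
    rw [isUnit_iff_degree_eq_zero, degree_eq_natDegree radical_ne_zero]
    exact_mod_cast Nat.le_zero.mp h
  obtain ⟨n, hn⟩ := exists_dvd_radical_self_pow (ne_zero_of_natDegree_gt hf)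
  exact hf.ne' (natDegree_eq_zero_of_isUnit (isUnit_of_dvd_unit hn (hunit.pow n)))

/-- Mason–Stothers (`Polynomial.abc`) for a triple that need not be coprime. -/
theorem natDegree_lt_natDegree_radical_mul_add [CharZero k] {f g h : k[X]} (hf : f ≠ 0)
    (hg : g ≠ 0) (hh : h ≠ 0) (hsum : f + g + h = 0) (hf0 : 0 < f.natDegree) :
    f.natDegree < (radical (f * g)).natDegree + h.natDegree := by
  obtain ⟨a, b, d, hab, rfl, rfl⟩ := exists_reduced_factors f hf g
  obtain rfl : h = d * -(a + b) := by linear_combination hsum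
  have hd : d ≠ 0 := left_ne_zero_of_mul hf
  have ha : a ≠ 0 := right_ne_zero_of_mul hf
  have hc : -(a + b) ≠ 0 := right_ne_zero_of_mul hh
  rw [natDegree_mul hd ha, natDegree_mul hd hc] at *
  rcases Polynomial.abc ha (right_ne_zero_of_mul hg) hc hab.isCoprime (by ring) with
    ⟨hdeg, -, -⟩ | ⟨ha', -, hc'⟩
  · have hdvd : radical (a * b * -(a + b)) ∣ radical (d * a * (d * b)) * -(a + b) :=
      radical_mul_dvd.trans <| mul_dvd_mul
        (radical_dvd_radical ⟨d * d, by ring⟩ (mul_ne_zero hf hg)) radical_dvd_self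
    have := natDegree_le_of_dvd hdvd (mul_ne_zero radical_ne_zero hc)
    rw [natDegree_mul radical_ne_zero hc] at this
    omega
  · have hfg : 0 < (d * a * (d * b)).natDegree := by
      rw [natDegree_mul hf hg, natDegree_mul hd ha]
      omega
    have := natDegree_radical_pos hfg
    rw [derivative_eq_zero.mp ha', derivative_eq_zero.mp hc']
    omega

theorem mul_natDegree_lt_of_pow_mul_add_pow_mul_add_eq_zero [CharZero k] {q₁ q₂ F G H : k[X]}
    {r t : ℕ} (hq₁ : 0 < q₁.natDegree) (hq₂ : q₂ ≠ 0) (hF : F ≠ 0) (hG : G ≠ 0) (hH : H ≠ 0)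
    (hsum : q₁ ^ r * F + q₂ ^ t * G + H = 0) :
    r * q₁.natDegree < q₁.natDegree + q₂.natDegree + G.natDegree + H.natDegree := by
  rcases r.eq_zero_or_pos with rfl | hr
  · omega
  have hq₁0 : q₁ ≠ 0 := ne_zero_of_natDegree_gt hq₁
  have hf : q₁ ^ r * F ≠ 0 := mul_ne_zero (pow_ne_zero r hq₁0) hF
  have hg : q₂ ^ t * G ≠ 0 := mul_ne_zero (pow_ne_zero t hq₂) hG
  have hdeg : (q₁ ^ r * F).natDegree = r * q₁.natDegree + F.natDegree := by
    rw [natDegree_mul (pow_ne_zero r hq₁0) hF, natDegree_pow]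
  have hmason := natDegree_lt_natDegree_radical_mul_add hf hg hH hsum
    (hdeg ▸ Nat.add_pos_left (Nat.mul_pos hr hq₁) _)
  have hrad := natDegree_le_of_dvd
    (radical_mul_dvd.trans (mul_dvd_mul (radical_pow_mul_dvd q₁ F r) (radical_pow_mul_dvd q₂ G t)))
    (mul_ne_zero (mul_ne_zero hq₁0 hF) (mul_ne_zero hq₂ hG))
  rw [natDegree_mul (mul_ne_zero hq₁0 hF) (mul_ne_zero hq₂ hG), natDegree_mul hq₁0 hF,
    natDegree_mul hq₂ hG] at hrad
  omega

end Polynomial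

lemma five_mul_mul_lt_four_mul {p m r t u τ υ : ℕ} (hp : 1 ≤ p) (hm : 2 * p ≤ m)
    (hr : r ≤ 1 + τ + υ) (hτ : p * τ + t * p ≤ m) (hυ : p * υ + u ≤ m)
    (ht : 4 * m ≤ 5 * (t * p)) (hu : 4 * m ≤ 5 * u) : 5 * (r * p) < 4 * m := by
  have hrp : r * p ≤ p + p * τ + p * υ :=
    calc r * p ≤ (1 + τ + υ) * p := Nat.mul_le_mul_right p hr
      _ = p + p * τ + p * υ := by ring
  have hdich : ∀ x, p * x = 0 ∨ p ≤ p * x := fun x => by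
    rcases x.eq_zero_or_pos with rfl | hx
    · exact Or.inl (mul_zero p)
    · exact Or.inr (Nat.le_mul_of_pos_right p hx)
  rcases hdich τ with _ | _ <;> rcases hdich υ with _ | _ <;> omega

theorem weighted_min_exponent_lt_general (k : Type*) [Field k] [CharZero k]
    (p : ℕ) (hp : 1 ≤ p)
    (R T U : MvPolynomial (Fin 2) k) (hR0 : R ≠ 0) (hT0 : T ≠ 0) (hU0 : U ≠ 0)
    (dR dT dU : ℕ)
    (hR : R.IsWeightedHomogeneous ![p, 1] dR)
    (hT : T.IsWeightedHomogeneous ![p, 1] dT)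
    (hU : U.IsWeightedHomogeneous ![p, 1] dU)
    (r t u m : ℕ) (hmT : dT + t * p = m) (hmU : dU + u = m)
    (c : k)
    (heq : X 0 ^ r * R + (X 0 + C c * X 1 ^ p) ^ t * T + X 1 ^ u * U = 0)
    (α β : ℕ) (hm : m = α * p + β) (hα : 2 ≤ α) :
    ((min (min (r * p) (t * p)) u : ℕ) : ℚ) < 4 / 5 * (m : ℚ) := by
  classical
  suffices h : 5 * min (min (r * p) (t * p)) u < 4 * m by
    have : (5 * min (min (r * p) (t * p)) u : ℚ) < 4 * m := by exact_mod_cast h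
    linarith
  by_contra! hmin
  have hpoly := Polynomial.mul_natDegree_lt_of_pow_mul_add_pow_mul_add_eq_zero
    (q₁ := Polynomial.X) (by simp) (Polynomial.X_add_C_ne_zero c)
    (hR.dehomogenize_ne_zero hR0) (hT.dehomogenize_ne_zero hT0) (hU.dehomogenize_ne_zero hU0)
    (by simpa using congrArg dehomogenize heq)
  rw [Polynomial.natDegree_X, Polynomial.natDegree_X_add_C] at hpoly
  have hτ : p * (dehomogenize T).natDegree + t * p ≤ m :=
    hmT ▸ Nat.add_le_add_right (hT.mul_natDegree_dehomogenize_le hT0) _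
  have hυ : p * (dehomogenize U).natDegree + u ≤ m :=
    hmU ▸ Nat.add_le_add_right (hU.mul_natDegree_dehomogenize_le hU0) _
  have h2p : 2 * p ≤ m := hm ▸ (Nat.mul_le_mul_right p hα).trans (Nat.le_add_right _ β)
  have := five_mul_mul_lt_four_mul (r := r) hp h2p (by omega) hτ hυ (by omega) (by omega)
  omega

/-- Second weighted version of the three-term lemma: if `R, T, U` are nonzero weighted
homogeneous polynomials (with `x₂` of weight `p` and `x₃` of weight `1`) with
`deg R + rp = deg T + tp = deg U + u = m`, if
`x₂^r R + (x₂ + c x₃^p)^t T + x₃^u U = 0` for some nonzero `c`, and if `m = αp + β` with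
`β < p` and `α ≥ 2`, then `min {rp, tp, u} < (4/5) m`. -/
theorem weighted_min_exponent_lt (k : Type*) [Field k] [CharZero k]
    (p : ℕ) (hp : 1 ≤ p)
    (R T U : MvPolynomial (Fin 2) k) (hR0 : R ≠ 0) (hT0 : T ≠ 0) (hU0 : U ≠ 0)
    (dR dT dU : ℕ)
    (hR : R.IsWeightedHomogeneous ![p, 1] dR)
    (hT : T.IsWeightedHomogeneous ![p, 1] dT)
    (hU : U.IsWeightedHomogeneous ![p, 1] dU)
    (r t u m : ℕ) (hmR : dR + r * p = m) (hmT : dT + t * p = m) (hmU : dU + u = m)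
    (c : k) (hc : c ≠ 0)
    (heq : X 0 ^ r * R + (X 0 + C c * X 1 ^ p) ^ t * T + X 1 ^ u * U = 0)
    (α β : ℕ) (hm : m = α * p + β) (hβ : β < p) (hα : 2 ≤ α) :
    ((min (min (r * p) (t * p)) u : ℕ) : ℚ) < 4 / 5 * (m : ℚ) :=
  weighted_min_exponent_lt_general k p hp R T U hR0 hT0 hU0 dR dT dU hR hT hU r t u m hmT hmU c heq
    α β hm hα
end

section
/- Let G be a group acting on a set Ω and let Z be a finite subset of Ω such that for every u ∈ G the sets Z and u·Z intersect. Then there exists a nonempty finite subset W of the union of the translates u·Z over all u ∈ G that is invariant under G, i.e. g·W = W for every g ∈ G. -/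
/-!
The nonempty subsets of `Z` are finitely many, and every `u` maps one of them, `u⁻¹ • Z ∩ Z`, to
another, `Z ∩ u • Z`. Hence `G` is covered by the finitely many transporters between such sets,
each empty or a left coset of a stabilizer, so by B. H. Neumann's lemma one of these sets `B` has a
stabilizer of finite index. The union of the (finitely many) translates of `B` is the invariant set.
-/

open Pointwise MulAction

theorem MulAction.exists_finiteIndex_stabilizer_of_forall_exists_smul_mem {G α : Type*} [Group G]
    [MulAction G α] {S : Set α} (hS : S.Finite) (h : ∀ g : G, ∃ b ∈ S, g • b ∈ S) :
    ∃ b ∈ S, (stabilizer G b).FiniteIndex := by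
  let transporter (p : α × α) : G := Classical.epsilon fun g : G => g • p.2 = p.1
  have hcovers : ⋃ p ∈ hS.toFinset ×ˢ hS.toFinset,
      transporter p • (stabilizer G p.2 : Set G) = Set.univ := by
    refine Set.eq_univ_of_forall fun g => ?_
    obtain ⟨b, hb, hgb⟩ := h g
    have htrans : transporter (g • b, b) • b = g • b :=
      Classical.epsilon_spec (p := fun γ : G => γ • b = g • b) ⟨g, rfl⟩
    refine Set.mem_biUnion (x := (g • b, b)) (by simp [hb, hgb]) ?_
    rw [mem_leftCoset_iff, SetLike.mem_coe, mem_stabilizer_iff, mul_smul, inv_smul_eq_iff,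
      htrans]
  obtain ⟨p, hp, hfi⟩ := Subgroup.exists_finiteIndex_of_leftCoset_cover hcovers
  exact ⟨p.2, hS.mem_toFinset.mp (Finset.mem_product.mp hp).2, hfi⟩

theorem MulAction.finite_orbit_of_finiteIndex_stabilizer {G α : Type*} [Group G] [MulAction G α]
    (a : α) [(stabilizer G a).FiniteIndex] : (orbit G a).Finite :=
  Set.finite_of_ncard_ne_zero <| index_stabilizer G a ▸ Subgroup.FiniteIndex.index_ne_zero

theorem Set.Finite.iUnion_smul_of_finiteIndex_stabilizer {G α : Type*} [Group G] [MulAction G α]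
    {s : Set α} (hs : s.Finite) [(stabilizer G s).FiniteIndex] : (⋃ g : G, g • s).Finite := by
  rw [← Set.sUnion_range]
  exact (finite_orbit_of_finiteIndex_stabilizer s).sUnion fun _ ⟨g, hg⟩ => hg ▸ hs.smul_set

theorem Set.smul_iUnion_smul {G α : Type*} [Group G] [MulAction G α] (g : G) (s : Set α) :
    g • ⋃ h : G, h • s = ⋃ h : G, h • s := by
  simp_rw [Set.smul_set_iUnion, smul_smul]
  exact (Equiv.mulLeft g).surjective.iUnion_comp fun h => h • s

/-- If `G` acts on a set `Ω` and `Z ⊆ Ω` is a finite subset such that `Z` meets every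
translate `u • Z`, then some nonempty finite subset of `⋃ u, u • Z` is `G`-invariant. -/
theorem exists_finite_invariant_subset {G Ω : Type*} [Group G] [MulAction G Ω]
    (Z : Set Ω) (hZ : Z.Finite) (h : ∀ u : G, (Z ∩ u • Z).Nonempty) :
    ∃ W : Set Ω, W.Finite ∧ W.Nonempty ∧ W ⊆ (⋃ u : G, u • Z) ∧ ∀ g : G, g • W = W := by
  let S : Set (Set Ω) := {B | B ⊆ Z ∧ B.Nonempty}
  have hS : S.Finite := hZ.finite_subsets.subset fun _ hB => hB.1
  have hmaps (u : G) : ∃ B ∈ S, u • B ∈ S := by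
    refine ⟨u⁻¹ • Z ∩ Z, ⟨Set.inter_subset_right, Set.inter_comm Z _ ▸ h u⁻¹⟩, ?_⟩
    rw [Set.smul_set_inter, smul_inv_smul]
    exact ⟨Set.inter_subset_left, h u⟩
  obtain ⟨B, ⟨hBZ, hB⟩, hfi⟩ := exists_finiteIndex_stabilizer_of_forall_exists_smul_mem hS hmaps
  refine ⟨⋃ u : G, u • B, (hZ.subset hBZ).iUnion_smul_of_finiteIndex_stabilizer, ?_,
    Set.iUnion_mono fun u => Set.smul_set_mono hBZ, fun g => Set.smul_iUnion_smul g B⟩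
  exact hB.mono (Set.subset_iUnion_of_subset 1 (one_smul G B).symm.subset)
end

section
/- Let n, m be positive integers and let G be a group. Suppose that every finitely generated subgroup H of G either contains a nonabelian free subgroup, or contains a solvable subgroup of derived length at most m whose index in H is at most n. Then G satisfies the strong Tits alternative: every subgroup of G either contains a nonabelian free subgroup or contains a solvable subgroup of finite index. -/
/-- A group contains a nonabelian free subgroup if it has a subgroup isomorphic to the
free group on two generators. -/
def ContainsNonabelianFree (G : Type*) [Group G] : Prop :=
  ∃ K : Subgroup G, Nonempty (↥K ≃* FreeGroup (Fin 2))

/-- A group is virtually solvable if it contains a solvable subgroup of finite index. -/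
def IsVirtuallySolvable (G : Type*) [Group G] : Prop :=
  ∃ K : Subgroup G, K.FiniteIndex ∧ IsSolvable ↥K

/-- A group satisfies the strong Tits alternative if every subgroup contains a nonabelian
free subgroup or is virtually solvable. -/
def StrongTitsAlternative (G : Type*) [Group G] : Prop :=
  ∀ H : Subgroup G, ContainsNonabelianFree ↥H ∨ IsVirtuallySolvable ↥H

/-!
For each finitely generated `K ≤ G` choose `S_K ≤ K` of index at most `n` with trivial `m`-th
derived subgroup. Fix an ultrafilter on the finitely generated subgroups containing every set
`{K | K₀ ≤ K}`, and let `N` consist of the elements lying in `S_K` for almost all `K`. Given `n + 1`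
elements of `G`, for almost all `K` two of them lie in a common coset of `S_K`; as there are
finitely many pairs, one pair does so for almost all `K`, i.e. lies in a common coset of `N`.
Hence `N` has finite index. Every finitely generated subgroup of `N` lies in almost every `S_K`,
so its `m`-th derived subgroup is trivial, and the `m`-th derived subgroup of `N` is the union of
those of its finitely generated subgroups.
-/

open Filter Subgroup

section DerivedSeries

variable {G H : Type*} [Group G] [Group H]

theorem derivedSeries_eq_bot_of_injective (f : G →* H) (hf : Function.Injective f) {m : ℕ}
    (h : derivedSeries H m = ⊥) : derivedSeries G m = ⊥ := by
  have := map_derivedSeries_le_derivedSeries f m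
  rwa [h, le_bot_iff, map_eq_bot_iff_of_injective _ hf] at this

theorem Subgroup.derivedSeries_eq_bot_of_le {A B : Subgroup G} (hAB : A ≤ B) {m : ℕ}
    (h : derivedSeries B m = ⊥) : derivedSeries A m = ⊥ :=
  derivedSeries_eq_bot_of_injective _ (inclusion_injective hAB) h

theorem Subgroup.derivedSeries_map_eq_bot_iff {K : Subgroup G} {f : G →* H}
    (hf : Function.Injective f) {m : ℕ} : derivedSeries (K.map f) m = ⊥ ↔ derivedSeries K m = ⊥ :=
  let e := K.equivMapOfInjective f hf
  ⟨derivedSeries_eq_bot_of_injective e.toMonoidHom e.injective,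
    derivedSeries_eq_bot_of_injective e.symm.toMonoidHom e.symm.injective⟩

theorem Subgroup.map_subtype_derivedSeries_mono {L₁ L₂ : Subgroup G} (h : L₁ ≤ L₂) (k : ℕ) :
    (derivedSeries L₁ k).map L₁.subtype ≤ (derivedSeries L₂ k).map L₂.subtype := by
  simpa only [map_map, subtype_comp_inclusion] using
    map_mono (f := L₂.subtype) (map_derivedSeries_le_derivedSeries (inclusion h) k)

theorem Subgroup.FG.map {K : Subgroup G} (hK : K.FG) (f : G →* H) : (K.map f).FG := by
  classical
  obtain ⟨s, rfl⟩ := hK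
  exact ⟨s.image f, by rw [Finset.coe_image, MonoidHom.map_closure]⟩

theorem exists_fg_mem_map_derivedSeries (k : ℕ) {x : G} (hx : x ∈ derivedSeries G k) :
    ∃ L : Subgroup G, L.FG ∧ x ∈ (derivedSeries L k).map L.subtype := by
  induction k generalizing x with
  | zero =>
    exact ⟨closure {x}, ⟨{x}, by simp⟩, ⟨x, mem_closure_singleton_self x⟩, mem_top _, rfl⟩
  | succ k ih =>
    rw [derivedSeries_succ, Subgroup.commutator_def] at hx
    induction hx using closure_induction with
    | mem y hy =>
      obtain ⟨a, ha, b, hb, rfl⟩ := hy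
      obtain ⟨La, hLa, ha⟩ := ih ha
      obtain ⟨Lb, hLb, hb⟩ := ih hb
      refine ⟨La ⊔ Lb, hLa.sup hLb, ?_⟩
      rw [derivedSeries_succ, map_commutator]
      exact commutator_mem_commutator (map_subtype_derivedSeries_mono le_sup_left k ha)
        (map_subtype_derivedSeries_mono le_sup_right k hb)
    | one => exact ⟨⊥, ⟨∅, by simp⟩, one_mem _⟩
    | mul y z _ _ hy hz =>
      obtain ⟨Ly, hLy, hy⟩ := hy
      obtain ⟨Lz, hLz, hz⟩ := hz
      exact ⟨Ly ⊔ Lz, hLy.sup hLz, mul_mem (map_subtype_derivedSeries_mono le_sup_left _ hy)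
        (map_subtype_derivedSeries_mono le_sup_right _ hz)⟩
    | inv y _ hy =>
      obtain ⟨L, hL, hy⟩ := hy
      exact ⟨L, hL, inv_mem hy⟩

theorem derivedSeries_eq_bot_of_forall_fg {m : ℕ}
    (h : ∀ L : Subgroup G, L.FG → derivedSeries L m = ⊥) : derivedSeries G m = ⊥ := by
  refine (eq_bot_iff_forall _).2 fun x hx => ?_
  obtain ⟨L, hL, hx⟩ := exists_fg_mem_map_derivedSeries m hx
  rwa [h L hL, Subgroup.map_bot, Subgroup.mem_bot] at hx

end DerivedSeries

namespace Subgroup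

variable {G : Type*} [Group G]

theorem exists_ne_inv_mul_mem_of_index_le {K : Subgroup G} {n : ℕ} (h0 : K.index ≠ 0)
    (hn : K.index ≤ n) (g : Fin (n + 1) → G) : ∃ i j, i ≠ j ∧ (g i)⁻¹ * g j ∈ K := by
  have : K.FiniteIndex := ⟨h0⟩
  have hni : ¬Function.Injective fun i => (g i : G ⧸ K) := fun hinj => by
    have := Nat.card_le_card_of_injective _ hinj
    rw [Nat.card_fin, ← index_eq_card] at this
    omega
  obtain ⟨i, j, he, hij⟩ := Function.not_injective_iff.mp hni
  exact ⟨i, j, hij, QuotientGroup.eq.mp he⟩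

theorem finiteIndex_of_forall_exists_inv_mul_mem {K : Subgroup G} (n : ℕ)
    (h : ∀ g : Fin (n + 1) → G, ∃ i j, i ≠ j ∧ (g i)⁻¹ * g j ∈ K) : K.FiniteIndex := by
  suffices Finite (G ⧸ K) from finiteIndex_of_finite_quotient
  by_contra hinf
  have : Infinite (G ⧸ K) := not_finite_iff_infinite.mp hinf
  let e := Infinite.natEmbedding (G ⧸ K)
  obtain ⟨i, j, hij, hmem⟩ := h fun i => (e i).out
  refine hij (Fin.val_injective (e.injective ?_))
  simpa using QuotientGroup.eq.mpr hmem

variable {ι : Type*}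

def filterLiminf (l : Filter ι) (T : ι → Subgroup G) : Subgroup G where
  carrier := {x | ∀ᶠ i in l, x ∈ T i}
  one_mem' := .of_forall fun i => (T i).one_mem
  mul_mem' ha hb := (ha.and hb).mono fun _ h => mul_mem h.1 h.2
  inv_mem' ha := ha.mono fun _ h => inv_mem h

variable {l : Filter ι} {T : ι → Subgroup G}

theorem FG.eventually_le_of_le_filterLiminf {L : Subgroup G} (hL : L.FG)
    (h : L ≤ filterLiminf l T) : ∀ᶠ i in l, L ≤ T i := by
  obtain ⟨s, rfl⟩ := hL
  simp only [closure_le]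
  exact (eventually_all_finset s).2 fun x hx => h (subset_closure hx)

theorem derivedSeries_filterLiminf_eq_bot [l.NeBot] {m : ℕ}
    (h : ∀ᶠ i in l, derivedSeries (T i) m = ⊥) : derivedSeries (filterLiminf l T) m = ⊥ := by
  refine derivedSeries_eq_bot_of_forall_fg fun L hL => ?_
  obtain ⟨i, hLi, hi⟩ :=
    ((hL.map (filterLiminf l T).subtype).eventually_le_of_le_filterLiminf
      (map_subtype_le L)).and h |>.exists
  exact (derivedSeries_map_eq_bot_iff (subtype_injective _)).1 (derivedSeries_eq_bot_of_le hLi hi)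

theorem finiteIndex_filterLiminf (U : Ultrafilter ι) (n : ℕ)
    (h : ∀ g : Fin (n + 1) → G, ∀ᶠ i in U, ∃ a b, a ≠ b ∧ (g a)⁻¹ * g b ∈ T i) :
    (filterLiminf (U : Filter ι) T).FiniteIndex := by
  refine finiteIndex_of_forall_exists_inv_mul_mem n fun g => ?_
  let pairs : Set (Fin (n + 1) × Fin (n + 1)) := {p | p.1 ≠ p.2}
  obtain ⟨⟨a, b⟩, hab, hmem⟩ := (U.eventually_exists_mem_iff pairs.toFinite
    (P := fun p i => (g p.1)⁻¹ * g p.2 ∈ T i)).1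
    ((h g).mono fun _ ⟨a, b, hab, hmem⟩ => ⟨(a, b), hab, hmem⟩)
  exact ⟨a, b, hab, hmem⟩

end Subgroup

def HasSolvableSubgroupOfIndexLE (n m : ℕ) (H : Type*) [Group H] : Prop :=
  ∃ S : Subgroup H, S.index ≠ 0 ∧ S.index ≤ n ∧ derivedSeries S m = ⊥

theorem HasSolvableSubgroupOfIndexLE.of_mulEquiv {n m : ℕ} {A B : Type*} [Group A] [Group B]
    (e : A ≃* B) (h : HasSolvableSubgroupOfIndexLE n m B) : HasSolvableSubgroupOfIndexLE n m A := by
  obtain ⟨S, h0, hn, hm⟩ := h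
  have hidx : (S.comap e.toMonoidHom).index = S.index := index_comap_of_surjective S e.surjective
  refine ⟨S.comap e.toMonoidHom, hidx ▸ h0, hidx ▸ hn, derivedSeries_eq_bot_of_injective
    (e.toMonoidHom.subgroupComap S) (fun x y hxy => Subtype.ext ?_) hm⟩
  exact e.injective (congrArg Subtype.val hxy)

theorem ContainsNonabelianFree.of_injective {A B : Type*} [Group A] [Group B] {f : A →* B}
    (hf : Function.Injective f) (h : ContainsNonabelianFree A) : ContainsNonabelianFree B := by
  obtain ⟨K, ⟨e⟩⟩ := h
  exact ⟨K.map f, ⟨(K.equivMapOfInjective f hf).symm.trans e⟩⟩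

theorem isVirtuallySolvable_of_forall_fg {G : Type*} [Group G] {n m : ℕ}
    (h : ∀ K : Subgroup G, K.FG → HasSolvableSubgroupOfIndexLE n m K) : IsVirtuallySolvable G := by
  classical
  choose S hS0 hSn hSm using fun s : Finset G => h (closure s) ⟨s, rfl⟩
  let T (s : Finset G) : Subgroup G := (S s).map (closure (s : Set G)).subtype
  let U : Ultrafilter (Finset G) := .of atTop
  have hpigeon (g : Fin (n + 1) → G) : ∀ᶠ s in U, ∃ a b, a ≠ b ∧ (g a)⁻¹ * g b ∈ T s := by
    have hU : ∀ᶠ s in (U : Filter (Finset G)), Finset.univ.image g ⊆ s :=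
      Ultrafilter.of_le atTop (eventually_ge_atTop _)
    refine hU.mono fun s hs => ?_
    have hg (a : Fin (n + 1)) : g a ∈ closure (s : Set G) :=
      subset_closure (hs (Finset.mem_image_of_mem g (Finset.mem_univ a)))
    obtain ⟨a, b, hab, hmem⟩ :=
      exists_ne_inv_mul_mem_of_index_le (hS0 s) (hSn s) fun a => ⟨g a, hg a⟩
    exact ⟨a, b, hab, _, hmem, rfl⟩
  exact ⟨filterLiminf U T, finiteIndex_filterLiminf U n hpigeon,
    ⟨⟨m, derivedSeries_filterLiminf_eq_bot
      (.of_forall fun s => (derivedSeries_map_eq_bot_iff (subtype_injective _)).2 (hSm s))⟩⟩⟩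

theorem strongTitsAlternative_of_fg_general (n m : ℕ)
    (G : Type*) [Group G]
    (h : ∀ H : Subgroup G, H.FG →
      ContainsNonabelianFree ↥H ∨
      ∃ S : Subgroup ↥H, S.index ≠ 0 ∧ S.index ≤ n ∧ derivedSeries ↥S m = ⊥) :
    StrongTitsAlternative G := by
  intro H
  by_cases hfree : ContainsNonabelianFree H
  · exact .inl hfree
  refine .inr (isVirtuallySolvable_of_forall_fg (n := n) (m := m) fun K hK => ?_)
  let e := K.equivMapOfInjective H.subtype (subtype_injective _)
  rcases h _ (hK.map H.subtype) with hK' | hK'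
  · exact absurd (hK'.of_injective (f := K.subtype.comp e.symm.toMonoidHom)
      ((subtype_injective _).comp e.symm.injective)) hfree
  · exact HasSolvableSubgroupOfIndexLE.of_mulEquiv e hK'

/-- If every finitely generated subgroup `H` of `G` contains a nonabelian free subgroup or a
solvable subgroup of derived length at most `m` and index at most `n` in `H`, then `G`
satisfies the strong Tits alternative. -/
theorem strongTitsAlternative_of_fg (n m : ℕ) (hn : 0 < n) (hm : 0 < m)
    (G : Type*) [Group G]
    (h : ∀ H : Subgroup G, H.FG →
      ContainsNonabelianFree ↥H ∨
      ∃ S : Subgroup ↥H, S.index ≠ 0 ∧ S.index ≤ n ∧ derivedSeries ↥S m = ⊥) :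
    StrongTitsAlternative G :=
  strongTitsAlternative_of_fg_general n m G h
end

section
/- Let V = {β ∈ ℝ³ : β1 + β2 + β3 = 0}, a Euclidean plane with the metric induced from ℝ³. For a permutation σ of {1,2,3} and real numbers m, m' ≥ 1, let L(σ, m, m') = {β ∈ V : exp(β_{σ(1)}) = m·exp(β_{σ(2)}) + m'·exp(β_{σ(3)})}. Then for any permutations σ, σ' of {1,2,3} and any real numbers m1, m2, m1', m2' ≥ 1 there exists an isometry of V mapping L(σ, m1, m2) onto L(σ', m1', m2'). -/
/-!
In the coordinates `x_i = exp β_i` the set `L(σ, m, m')` is cut out by the linear equation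
`x_{σ 0} = m x_{σ 1} + m' x_{σ 2}`. Translating `β` by `w` rescales each `x_i` by `exp w_i`,
which turns this equation into the one with coefficients `m exp (w_{σ 1} - w_{σ 0})` and
`m' exp (w_{σ 2} - w_{σ 0})`; since only these differences matter, `w` can be taken in `V`, and
positive coefficients can be matched arbitrarily. A permutation of coordinates, also an isometry
of `V`, then changes `σ` into `σ'`.
-/

/-- The plane `V = {β ∈ ℝ³ : β₁ + β₂ + β₃ = 0}` with the Euclidean metric induced
from `ℝ³`. -/
def Vplane : Set (EuclideanSpace ℝ (Fin 3)) :=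
  {β | β 0 + β 1 + β 2 = 0}

/-- The image in logarithmic coordinates of a non-principal admissible line:
`L(σ, m, m') = {β ∈ V : exp(β_{σ(1)}) = m exp(β_{σ(2)}) + m' exp(β_{σ(3)})}`. -/
def admLine (σ : Equiv.Perm (Fin 3)) (m m' : ℝ) : Set ↥Vplane :=
  {β | Real.exp ((β : EuclideanSpace ℝ (Fin 3)) (σ 0)) =
    m * Real.exp ((β : EuclideanSpace ℝ (Fin 3)) (σ 1)) +
      m' * Real.exp ((β : EuclideanSpace ℝ (Fin 3)) (σ 2))}

open Real

def IsometryEquiv.subtypeEquiv {α β : Type*} [PseudoEMetricSpace α] [PseudoEMetricSpace β]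
    (e : α ≃ᵢ β) {p : α → Prop} {q : β → Prop} (h : ∀ a, p a ↔ q (e a)) :
    {a // p a} ≃ᵢ {b // q b} where
  toEquiv := e.toEquiv.subtypeEquiv h
  isometry_toFun x y := e.isometry x y

section CoordPermAdd

variable {ι : Type*} [Fintype ι]

noncomputable def coordPermAddIso (ρ : Equiv.Perm ι) (t : EuclideanSpace ℝ ι) :
    EuclideanSpace ℝ ι ≃ᵢ EuclideanSpace ℝ ι :=
  (LinearIsometryEquiv.piLpCongrLeft 2 ℝ ℝ ρ.symm).toIsometryEquiv.trans (IsometryEquiv.addRight t)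

@[simp]
theorem coordPermAddIso_apply (ρ : Equiv.Perm ι) (t β : EuclideanSpace ℝ ι) (i : ι) :
    coordPermAddIso ρ t β i = β (ρ i) + t i := by
  simp [coordPermAddIso, Equiv.piCongrLeft'_apply]

theorem sum_coordPermAddIso (ρ : Equiv.Perm ι) (t β : EuclideanSpace ℝ ι) :
    ∑ i, coordPermAddIso ρ t β i = ∑ i, β i + ∑ i, t i := by
  simp only [coordPermAddIso_apply, Finset.sum_add_distrib, Equiv.sum_comp ρ (fun i => β i)]

end CoordPermAdd

theorem exp_add_eq_iff {x₀ x₁ x₂ w₀ w₁ w₂ m₁ m₂ m₁' m₂' : ℝ}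
    (h₁ : m₁' * exp (w₁ - w₀) = m₁) (h₂ : m₂' * exp (w₂ - w₀) = m₂) :
    exp (x₀ + w₀) = m₁' * exp (x₁ + w₁) + m₂' * exp (x₂ + w₂) ↔
      exp x₀ = m₁ * exp x₁ + m₂ * exp x₂ := by
  have hw₁ : m₁' * exp (x₁ + w₁) = exp w₀ * (m₁ * exp x₁) := by
    rw [← h₁, exp_add, exp_sub]; field_simp
  have hw₂ : m₂' * exp (x₂ + w₂) = exp w₀ * (m₂ * exp x₂) := by
    rw [← h₂, exp_add, exp_sub]; field_simp
  rw [hw₁, hw₂, ← mul_add, exp_add, mul_comm, mul_right_inj' (exp_pos w₀).ne']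

theorem mul_exp_log_div {a b : ℝ} (ha : 0 < a) (hb : 0 < b) : b * exp (log (a / b)) = a := by
  rw [exp_log (div_pos ha hb), mul_div_cancel₀ a hb.ne']

theorem mem_Vplane_iff {β : EuclideanSpace ℝ (Fin 3)} : β ∈ Vplane ↔ ∑ i, β i = 0 := by
  rw [Fin.sum_univ_three]; rfl

namespace Vplane

noncomputable def coordPermAddIso (ρ : Equiv.Perm (Fin 3)) (t : EuclideanSpace ℝ (Fin 3))
    (ht : t ∈ Vplane) : ↥Vplane ≃ᵢ ↥Vplane :=
  (_root_.coordPermAddIso ρ t).subtypeEquiv fun β => by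
    rw [mem_Vplane_iff, mem_Vplane_iff, sum_coordPermAddIso, mem_Vplane_iff.1 ht, add_zero]

@[simp]
theorem coe_coordPermAddIso_apply (ρ : Equiv.Perm (Fin 3)) (t : EuclideanSpace ℝ (Fin 3))
    (ht : t ∈ Vplane) (β : ↥Vplane) :
    (coordPermAddIso ρ t ht β : EuclideanSpace ℝ (Fin 3)) = _root_.coordPermAddIso ρ t β :=
  rfl

theorem exists_mem_sub_eq (σ : Equiv.Perm (Fin 3)) (a b : ℝ) :
    ∃ t ∈ Vplane, t (σ 1) - t (σ 0) = a ∧ t (σ 2) - t (σ 0) = b := by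
  let w : EuclideanSpace ℝ (Fin 3) := !₂[0, a, b] - ((a + b) / 3) • !₂[1, 1, 1]
  refine ⟨_root_.coordPermAddIso σ⁻¹ 0 w, ?_, ?_, ?_⟩
  · rw [mem_Vplane_iff, sum_coordPermAddIso, Fin.sum_univ_three, Fin.sum_univ_three]
    simp only [w, PiLp.sub_apply, PiLp.smul_apply, PiLp.zero_apply, smul_eq_mul,
      Matrix.cons_val_zero, Matrix.cons_val_one, Matrix.cons_val, add_zero]
    ring
  all_goals simp [w]

theorem coordPermAddIso_preimage_admLine (σ σ' : Equiv.Perm (Fin 3))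
    (t : EuclideanSpace ℝ (Fin 3)) (ht : t ∈ Vplane) {m₁ m₂ m₁' m₂' : ℝ}
    (h₁ : m₁' * exp (t (σ' 1) - t (σ' 0)) = m₁) (h₂ : m₂' * exp (t (σ' 2) - t (σ' 0)) = m₂) :
    coordPermAddIso (σ * σ'⁻¹) t ht ⁻¹' admLine σ' m₁' m₂' = admLine σ m₁ m₂ := by
  ext β
  have hcoord : ∀ j, (coordPermAddIso (σ * σ'⁻¹) t ht β : EuclideanSpace ℝ (Fin 3)) (σ' j) =
      (β : EuclideanSpace ℝ (Fin 3)) (σ j) + t (σ' j) := fun j => by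
    simp
  simp only [Set.mem_preimage, admLine, Set.mem_ofPred_eq, hcoord]
  exact exp_add_eq_iff h₁ h₂

end Vplane

/-- Any two non-principal admissible lines are related by an isometry of the plane `V`. -/
theorem exists_isometry_mapping_admLine
    (σ σ' : Equiv.Perm (Fin 3)) (m₁ m₂ m₁' m₂' : ℝ)
    (hm₁ : 1 ≤ m₁) (hm₂ : 1 ≤ m₂) (hm₁' : 1 ≤ m₁') (hm₂' : 1 ≤ m₂') :
    ∃ φ : ↥Vplane ≃ᵢ ↥Vplane, φ '' admLine σ m₁ m₂ = admLine σ' m₁' m₂' := by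
  obtain ⟨t, ht, h₁, h₂⟩ := Vplane.exists_mem_sub_eq σ' (log (m₁ / m₁')) (log (m₂ / m₂'))
  have hpre := Vplane.coordPermAddIso_preimage_admLine σ σ' t ht
    (by rw [h₁, mul_exp_log_div] <;> linarith) (by rw [h₂, mul_exp_log_div] <;> linarith)
  refine ⟨Vplane.coordPermAddIso (σ * σ'⁻¹) t ht, ?_⟩
  rw [← hpre, Set.image_preimage_eq _ (IsometryEquiv.surjective _)]
end
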